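/- arXiv:2007.08023 — 2 statements merged into one kernel-verified Lean document; each statement's English description precedes it below -/
import Mathlib

section
/- Schwenk's coalescence formula: if F is the coalescence of graphs G and H obtained by identifying a vertex g of G with a vertex h of H, then P_F(x) = P_G(x)·P_{H−h}(x) + P_{G−g}(x)·P_H(x) − x·P_{G−g}(x)·P_{H−h}(x). -/
open scoped Classical
open Polynomial

noncomputable section

/-- Adjacency matrix of a simple graph, over `ℝ`. -/
def adjM {V : Type*} [Fintype V] (G : SimpleGraph V) : Matrix V V ℝ :=
  fun a b => if G.Adj a b then 1 else 0

/-- Characteristic polynomial `det (x•I - A(G))` of the adjacency matrix. -/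
def charP {V : Type*} [Fintype V] [DecidableEq V] (G : SimpleGraph V) : Polynomial ℝ :=
  (adjM G).charpoly

/-- Spectral radius: the largest real eigenvalue of the (symmetric, nonnegative)
adjacency matrix, i.e. the largest real root of the characteristic polynomial. -/
def specRad {V : Type*} [Fintype V] [DecidableEq V] (G : SimpleGraph V) : ℝ :=
  sSup {x : ℝ | (charP G).IsRoot x}

/-- Vertex-deleted subgraph `G - v`. -/
def del {V : Type*} (G : SimpleGraph V) (v : V) : SimpleGraph {u : V // u ≠ v} :=
  SimpleGraph.induce {u : V | u ≠ v} G

/-- Coalescence of `G` and `H` obtained by identifying `g ∈ V(G)` with `h ∈ V(H)`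
(the vertex `Sum.inl g` plays the role of the identified vertex). -/
def coal {V W : Type*} (G : SimpleGraph V) (H : SimpleGraph W) (g : V) (h : W) :
    SimpleGraph (V ⊕ {w : W // w ≠ h}) where
  Adj x y :=
    match x, y with
    | Sum.inl a, Sum.inl b => G.Adj a b
    | Sum.inl a, Sum.inr b => a = g ∧ H.Adj h b.1
    | Sum.inr a, Sum.inl b => b = g ∧ H.Adj h a.1
    | Sum.inr a, Sum.inr b => H.Adj a.1 b.1
  symm := by
    refine ⟨?_⟩
    rintro (a | a) (b | b) hxy
    exacts [G.adj_symm hxy, hxy, hxy, H.adj_symm hxy]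
  loopless := by
    refine ⟨?_⟩
    rintro (a | a) hxy
    exacts [G.irrefl hxy, H.irrefl hxy]

/-!
Expand the characteristic determinant of the coalescence along the row of the identified vertex.
For matrices glued at one index, with the two diagonal entries there added, linearity in that row
gives `det (M.coalesce N g h) = det M * det (N.delete h) + det (M.delete g) * det N`: each
summand is a block triangular determinant, the second one after moving `h` into the slot of `g`.
The characteristic matrix of `A_F` is the gluing of those of `A_G` and `A_H` with `X` subtracted
at the identified diagonal entry, and that correction contributes `-X * P_{G-g} * P_{H-h}`.
-/

namespace Matrix

variable {R : Type*} [CommRing R] {V W : Type*}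

def delete {α : Type*} (M : Matrix V V α) (g : V) : Matrix {v // v ≠ g} {v // v ≠ g} α :=
  M.submatrix Subtype.val Subtype.val

@[simp]
theorem delete_apply {α : Type*} (M : Matrix V V α) (g : V) (a b : {v // v ≠ g}) :
    M.delete g a b = M a b :=
  rfl

variable [DecidableEq V]

theorem det_updateRow_single_one [Fintype V] (M : Matrix V V R) (g : V) :
    (M.updateRow g (Pi.single g 1)).det = (M.delete g).det := by
  rw [← det_submatrix_equiv_self (Equiv.sumCompl (· ≠ g))]
  have hblocks : (M.updateRow g (Pi.single g 1)).submatrix (Equiv.sumCompl (· ≠ g))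
        (Equiv.sumCompl (· ≠ g))
      = fromBlocks (M.delete g) (of fun a (_ : {u // ¬u ≠ g}) => M a g) 0 1 := by
    ext (⟨a, ha⟩ | ⟨x, hx⟩) (⟨b, hb⟩ | ⟨y, hy⟩)
    · simp [updateRow_apply, ha]
    · obtain rfl : y = g := not_not.mp hy
      simp [updateRow_apply, ha]
    · obtain rfl : x = g := not_not.mp hx
      simp [hb]
    · obtain rfl : x = g := not_not.mp hx
      obtain rfl : y = x := not_not.mp hy
      simp
  rw [hblocks, det_fromBlocks_zero₂₁, det_one, mul_one]

theorem charmatrix_submatrix {m : Type*} [Fintype V] [Fintype m] [DecidableEq m]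
    (M : Matrix V V R) {e : m → V} (he : Function.Injective e) :
    charmatrix (M.submatrix e e) = (charmatrix M).submatrix e e := by
  ext i j
  rcases eq_or_ne i j with rfl | hij
  · simp
  · simp [charmatrix_apply_ne _ _ _ hij, charmatrix_apply_ne _ _ _ (he.ne hij)]

theorem charpoly_delete [Fintype V] (M : Matrix V V R) (g : V) :
    (M.delete g).charpoly = ((charmatrix M).delete g).det :=
  congrArg det (charmatrix_submatrix M Subtype.val_injective)

def coalesce (M : Matrix V V R) (N : Matrix W W R) (g : V) (h : W) :
    Matrix (V ⊕ {w // w ≠ h}) (V ⊕ {w // w ≠ h}) R :=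
  fromBlocks (M + single g g (N h h)) (of fun a u => if a = g then N h u else 0)
    (of fun u a => if a = g then N u h else 0) (N.delete h)

section coalesce

variable (M : Matrix V V R) (N : Matrix W W R) (g : V) (h : W)

@[simp]
theorem coalesce_inl_inl (a b : V) :
    M.coalesce N g h (.inl a) (.inl b) = M a b + if a = g ∧ b = g then N h h else 0 := by
  simp [coalesce, single_apply, eq_comm]

@[simp]
theorem coalesce_inl_inr (a : V) (u : {w // w ≠ h}) :
    M.coalesce N g h (.inl a) (.inr u) = if a = g then N h u else 0 :=
  rfl

@[simp]
theorem coalesce_inr_inl (u : {w // w ≠ h}) (b : V) :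
    M.coalesce N g h (.inr u) (.inl b) = if b = g then N u h else 0 :=
  rfl

@[simp]
theorem coalesce_inr_inr (u v : {w // w ≠ h}) :
    M.coalesce N g h (.inr u) (.inr v) = N u v :=
  rfl

end coalesce

variable [DecidableEq W]

def coalesceEquiv (g : V) (h : W) : {v // v ≠ g} ⊕ W ≃ V ⊕ {w // w ≠ h} where
  toFun
    | .inl v => .inl v
    | .inr w => if hw : w = h then .inl g else .inr ⟨w, hw⟩
  invFun
    | .inl v => if hv : v = g then .inr h else .inl ⟨v, hv⟩
    | .inr w => .inr w
  left_inv := by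
    rintro (v | w)
    · simp [v.2]
    · by_cases hw : w = h <;> simp [hw]
  right_inv := by
    rintro (v | w)
    · by_cases hv : v = g <;> simp [hv]
    · simp [w.2]

theorem det_coalesce [Fintype V] [Fintype W] (M : Matrix V V R) (N : Matrix W W R) (g : V)
    (h : W) : (M.coalesce N g h).det = M.det * (N.delete h).det + (M.delete g).det * N.det := by
  set Q := M.coalesce N g h
  set rowG : V ⊕ {w // w ≠ h} → R := Sum.elim (M g) 0
  set rowH : V ⊕ {w // w ≠ h} → R := Sum.elim (Pi.single g (N h h)) fun u => N h u
  have hrow : Q (.inl g) = rowG + rowH := by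
    ext (b | u) <;> simp [Q, rowG, rowH, Pi.single_apply]
  have hG : (Q.updateRow (.inl g) rowG).det = M.det * (N.delete h).det := by
    have : Q.updateRow (.inl g) rowG
        = fromBlocks M 0 (of fun (u : {w // w ≠ h}) a => if a = g then N u h else 0)
            (N.delete h) := by
      ext (a | u) (b | v)
      · by_cases ha : a = g <;> simp [Q, rowG, updateRow_apply, ha]
      · by_cases ha : a = g <;> simp [Q, rowG, updateRow_apply, ha]
      all_goals simp [Q, updateRow_apply]
    rw [this, det_fromBlocks_zero₁₂]
  have hH : (Q.updateRow (.inl g) rowH).det = (M.delete g).det * N.det := by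
    rw [← det_submatrix_equiv_self (coalesceEquiv g h)]
    have : (Q.updateRow (.inl g) rowH).submatrix (coalesceEquiv g h) (coalesceEquiv g h)
        = fromBlocks (M.delete g) (of fun v w => if w = h then M v g else 0) 0 N := by
      ext (⟨a, ha⟩ | w) (⟨b, hb⟩ | w')
      · simp [Q, coalesceEquiv, updateRow_apply, ha]
      · by_cases hw' : w' = h <;> simp [Q, coalesceEquiv, updateRow_apply, ha, hw']
      · by_cases hw : w = h <;> simp [Q, rowH, coalesceEquiv, updateRow_apply, hb, hw]
      · by_cases hw : w = h <;> by_cases hw' : w' = h <;>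
          simp [Q, rowH, coalesceEquiv, updateRow_apply, hw, hw']
    rw [this, det_fromBlocks_zero₂₁]
  rw [← Q.updateRow_eq_self (.inl g), hrow, det_updateRow_add, hG, hH]

theorem det_coalesce_updateRow_single_one [Fintype V] [Fintype W] (M : Matrix V V R)
    (N : Matrix W W R) (g : V) (h : W) :
    ((M.coalesce N g h).updateRow (.inl g) (Pi.single (.inl g) 1)).det
      = (M.delete g).det * (N.delete h).det := by
  have : (M.coalesce N g h).updateRow (.inl g) (Pi.single (.inl g) 1)
      = fromBlocks (M.updateRow g (Pi.single g 1)) 0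
          (of fun (u : {w // w ≠ h}) a => if a = g then N u h else 0) (N.delete h) := by
    ext (a | u) (b | v)
    · by_cases ha : a = g <;> by_cases hb : b = g <;> simp [updateRow_apply, ha, hb]
    · by_cases ha : a = g <;> simp [updateRow_apply, ha]
    all_goals simp [updateRow_apply]
  rw [this, det_fromBlocks_zero₁₂, det_updateRow_single_one]

theorem charpoly_coalesce [Fintype V] [Fintype W] (M : Matrix V V R) (N : Matrix W W R) (g : V)
    (h : W) :
    (M.coalesce N g h).charpoly = M.charpoly * (N.delete h).charpoly
      + (M.delete g).charpoly * N.charpoly - X * (M.delete g).charpoly * (N.delete h).charpoly := by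
  set Q := (charmatrix M).coalesce (charmatrix N) g h
  have hchar : charmatrix (M.coalesce N g h)
      = Q.updateRow (.inl g) (Q (.inl g) + (-X : R[X]) • Pi.single (.inl g) 1) := by
    ext (a | u) (b | v) : 1
    · by_cases ha : a = g <;> by_cases hb : b = g <;>
        simp [Q, updateRow_apply, charmatrix_apply, diagonal_apply, ha, hb]
      ring
    · by_cases ha : a = g <;> simp [Q, updateRow_apply, ha, Ne.symm v.2]
    · by_cases hb : b = g <;> simp [Q, updateRow_apply, hb, u.2]
    · simp [Q, updateRow_apply, charmatrix_apply, diagonal_apply, Subtype.ext_iff]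
  rw [charpoly, hchar, det_updateRow_add, det_updateRow_smul, updateRow_eq_self, det_coalesce,
    det_coalesce_updateRow_single_one, ← charpoly_delete, ← charpoly_delete, ← charpoly,
    ← charpoly]
  ring

end Matrix

theorem adjM_coal {V W : Type*} [Fintype V] [DecidableEq V] [Fintype W] [DecidableEq W]
    (G : SimpleGraph V) (H : SimpleGraph W) (g : V) (h : W) :
    adjM (coal G H g h) = (adjM G).coalesce (adjM H) g h := by
  ext (a | u) (b | v)
  · change adjM G a b = _
    simp [adjM]
  · by_cases ha : a = g <;> simp [adjM, coal, ha]
  · by_cases hb : b = g <;> simp [adjM, coal, hb, H.adj_comm]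
  · rfl

theorem adjM_del {V : Type*} [Fintype V] [DecidableEq V] (G : SimpleGraph V) (v : V) :
    adjM (del G v) = (adjM G).delete v :=
  rfl

/-- Schwenk's coalescence formula:
`P_F = P_G * P_{H-h} + P_{G-g} * P_H - x * P_{G-g} * P_{H-h}`. -/
theorem schwenk_coalescence {V W : Type*} [Fintype V] [DecidableEq V]
    [Fintype W] [DecidableEq W] (G : SimpleGraph V) (H : SimpleGraph W)
    (g : V) (h : W) :
    charP (coal G H g h) =
      charP G * charP (del H h) + charP (del G g) * charP H
        - X * charP (del G g) * charP (del H h) := by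
  simp only [_root_.charP, adjM_coal, adjM_del]
  exact Matrix.charpoly_coalesce _ _ g h
end
end

section
/- For every integer q ≥ 5, the polynomial f_q(x) = (x−q)·((x−q)(x+2)+1) − 2q satisfies f_q(q+1) ≤ 0 and f_q(q+√2) ≥ 0; moreover f_q is convex on (q,∞), so its unique root on (q, ∞) is at least q + (4 + (q−1)√2)/(q + 3√2). -/
/-!
In the variable `t = x - q` the cubic is `t³ + (q + 2) t² + t - 2q`, whose coefficients are
nonnegative, so `f_q` is increasing and convex on `[q, ∞)`. Since `f_q(q + 1) = 4 - q < 0`, a root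
beyond `q` lies beyond `q + 1`; there convexity keeps the graph below the secant through
`q + 1` and `q + √2`, so the root lies to the right of the zero of that secant, which is the
stated bound.
-/

open Set

def fq (q x : ℝ) : ℝ := (x - q) * ((x - q) * (x + 2) + 1) - 2 * q

lemma fq_q_add_one (q : ℝ) : fq q (q + 1) = 4 - q := by
  unfold fq; ring

lemma fq_q_add_sqrt_two (q : ℝ) : fq q (q + √2) = 4 + 3 * √2 := by
  unfold fq; linear_combination (q + √2 + 2) * Real.mul_self_sqrt zero_le_two

lemma hasDerivAt_fq (q x : ℝ) :
    HasDerivAt (fq q) (3 * (x - q) ^ 2 + 2 * (q + 2) * (x - q) + 1) x := by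
  have h := (((hasDerivAt_id' x).sub_const q).mul ((((hasDerivAt_id' x).sub_const q).mul
    ((hasDerivAt_id' x).add_const 2)).add_const 1)).sub_const (2 * q)
  exact h.congr_deriv (by simp only [Pi.mul_apply]; ring)

lemma strictMonoOn_fq {q : ℝ} (hq : -2 ≤ q) : StrictMonoOn (fq q) (Ici q) := by
  refine strictMonoOn_of_deriv_pos (convex_Ici q)
    (fun x _ => (hasDerivAt_fq q x).continuousAt.continuousWithinAt) fun x hx => ?_
  rw [interior_Ici, mem_Ioi] at hx
  rw [(hasDerivAt_fq q x).deriv]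
  have ht : 0 < x - q := sub_pos.2 hx
  nlinarith

lemma convexOn_fq {q : ℝ} (hq : -2 ≤ q) : ConvexOn ℝ (Ici q) (fq q) := by
  refine convexOn_of_hasDerivWithinAt2_nonneg (f'' := fun x => 6 * (x - q) + 2 * (q + 2))
    (convex_Ici q) (fun x _ => (hasDerivAt_fq q x).continuousAt.continuousWithinAt)
    (fun x _ => (hasDerivAt_fq q x).hasDerivWithinAt) (fun x _ => ?_) (fun x hx => ?_)
  · have h := ((((hasDerivAt_id' x).sub_const q).pow 2).const_mul 3).add
      (((hasDerivAt_id' x).sub_const q).const_mul (2 * (q + 2))) |>.add_const 1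
    exact h.hasDerivWithinAt.congr_deriv (by ring)
  · rw [interior_Ici, mem_Ioi] at hx
    linarith

/-- `a - f a * (b - a) / (f b - f a)` is the zero of the secant of `f` through `a` and `b`. -/
lemma ConvexOn.secant_root_le {s : Set ℝ} {f : ℝ → ℝ} (hf : ConvexOn ℝ s f)
    {a b r : ℝ} (ha : a ∈ s) (hb : b ∈ s) (hr : r ∈ s) (har : a < r)
    (hfa : f a ≤ 0) (hfb : 0 < f b) (hfr : f r = 0) :
    a - f a * (b - a) / (f b - f a) ≤ r := by
  have hfab : 0 < f b - f a := by linarith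
  rw [sub_le_comm, le_div_iff₀ hfab]
  rcases le_total r b with hrb | hbr
  · have h := hf.secant_mono ha hr hb har.ne' (har.trans_le hrb).ne' hrb
    rw [hfr, div_le_div_iff₀ (sub_pos.2 har) (sub_pos.2 (har.trans_le hrb))] at h
    nlinarith
  · nlinarith

/-- For every integer `q ≥ 5`, `f_q(q+1) ≤ 0` and `f_q(q+√2) ≥ 0`, where
`f_q(x) = (x-q)((x-q)(x+2)+1) - 2q`; moreover `f_q` is convex on `(q,∞)`, so its
unique root on `(q, ∞)` is at least `q + (4 + (q-1)√2)/(q + 3√2)`. -/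
theorem fq_root_bounds_large (q : ℕ) (hq : 5 ≤ q) :
    (((q : ℝ) + 1) - q) * ((((q : ℝ) + 1) - q) * (((q : ℝ) + 1) + 2) + 1) - 2 * q ≤ 0 ∧
    0 ≤ (((q : ℝ) + Real.sqrt 2) - q) *
        ((((q : ℝ) + Real.sqrt 2) - q) * (((q : ℝ) + Real.sqrt 2) + 2) + 1) - 2 * q ∧
    ConvexOn ℝ (Set.Ioi (q : ℝ))
      (fun x : ℝ => (x - q) * ((x - q) * (x + 2) + 1) - 2 * q) ∧
    ∀ x : ℝ, (q : ℝ) < x → (x - q) * ((x - q) * (x + 2) + 1) - 2 * q = 0 →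
      (q : ℝ) + (4 + ((q : ℝ) - 1) * Real.sqrt 2) / ((q : ℝ) + 3 * Real.sqrt 2) ≤ x := by
  have hq5 : (5 : ℝ) ≤ q := by exact_mod_cast hq
  have hconvex : ConvexOn ℝ (Ici (q : ℝ)) (fq q) := convexOn_fq (by linarith)
  have hneg : fq q (q + 1) < 0 := by rw [fq_q_add_one]; linarith
  have hpos : 0 < fq q (q + √2) := by rw [fq_q_add_sqrt_two]; positivity
  refine ⟨hneg.le, hpos.le, hconvex.subset Ioi_subset_Ici_self (convex_Ioi _),
    fun x hx hroot => ?_⟩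
  have hx1 : (q : ℝ) + 1 < x := by
    by_contra! hle
    have hmono := (strictMonoOn_fq (q := q) (by linarith)).le_iff_le (a := x) (b := q + 1)
      hx.le (by simp)
    exact hneg.not_ge (hroot ▸ hmono.2 hle)
  have hsecant := hconvex.secant_root_le (a := q + 1) (b := q + √2) (by simp) (by simp) hx.le hx1
    hneg.le hpos hroot
  rw [fq_q_add_one, fq_q_add_sqrt_two,
    show 4 + 3 * √2 - (4 - q) = (q : ℝ) + 3 * √2 by ring] at hsecant
  have hD : (q : ℝ) + 3 * √2 ≠ 0 := by positivity
  convert hsecant using 1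
  field_simp
  ring
end
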